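/- arXiv:2211.05491 — 3 statements merged into one kernel-verified Lean document; each statement's English description precedes it below -/
import Mathlib

section
/- Let d ≥ 1, let ρ₀, ρ₁ be quantum states on ℂ^d, and define the hybrid states ρ'₀ = (I₂/2) ⊗ ρ₀ and ρ'₁ = (1/2)·Σ_{b∈{0,1}} |b⟩⟨b| ⊗ ρ_b on ℂ² ⊗ ℂ^d. If there exists a matrix O' on ℂ² ⊗ ℂ^d with 0 ≤ O' ≤ I such that Tr[O'(ρ'₁ − ρ'₀)] = ε with ε ≥ 0, then there exists a matrix O on ℂ^d with 0 ≤ O ≤ I such that Tr[O(ρ₁ − ρ₀)] ≥ ε/2. -/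
/-
The hybrid states differ only in the `|1⟩⟨1|` block: `ρ'₁ - ρ'₀ = ½ |1⟩⟨1| ⊗ (ρ₁ - ρ₀)`.
Hence compressing `O'` to that block, `O = (⟨1| ⊗ I) O' (|1⟩ ⊗ I)`, gives an operator with
`0 ≤ O ≤ I` and advantage `Tr[O(ρ₁ - ρ₀)] = 2ε ≥ ε/2`.
-/

open Matrix BigOperators Kronecker
open scoped ComplexOrder

noncomputable section

/-- The projector `|b⟩⟨b|` on `ℂ²`. -/
def proj (b : Fin 2) : Matrix (Fin 2) (Fin 2) ℂ := Matrix.single b b 1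

namespace Matrix

variable {R m n : Type*}

theorem trace_mul_single_kronecker [CommSemiring R] [Fintype m] [Fintype n] [DecidableEq m]
    (O : Matrix (m × n) (m × n) R) (b : m) (A : Matrix n n R) :
    (O * (single b b 1 ⊗ₖ A)).trace = (O.submatrix (b, ·) (b, ·) * A).trace := by
  simp [trace, mul_apply, kroneckerMap_apply, single_apply, Fintype.sum_prod_type, ite_and]

theorem PosSemidef.one_sub_submatrix [CommRing R] [PartialOrder R] [StarRing R]
    [DecidableEq m] [DecidableEq n] {O : Matrix n n R} (hO : (1 - O).PosSemidef)
    {e : m → n} (he : Function.Injective e) : (1 - O.submatrix e e).PosSemidef := by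
  simpa [submatrix_sub, submatrix_one e he] using hO.submatrix e

end Matrix

theorem proj_zero_add_proj_one : proj 0 + proj 1 = 1 := by
  ext i j
  fin_cases i <;> fin_cases j <;> simp [proj]

theorem hybrid_sub_eq {n : Type*} (ρ₀ ρ₁ : Matrix n n ℂ) :
    (1/2 : ℂ) • (proj 0 ⊗ₖ ρ₀ + proj 1 ⊗ₖ ρ₁) - (1/2 : ℂ) • ((1 : Matrix (Fin 2) (Fin 2) ℂ) ⊗ₖ ρ₀)
      = (1/2 : ℂ) • (proj 1 ⊗ₖ (ρ₁ - ρ₀)) := by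
  rw [← proj_zero_add_proj_one, add_kronecker, ← smul_sub]
  conv_lhs => rw [← sub_add_cancel ρ₁ ρ₀, kronecker_add]
  abel_nf

theorem hybrid_distinguisher_general
    (d : ℕ)
    (ρ₀ ρ₁ : Matrix (Fin d) (Fin d) ℂ)
    (ε : ℝ) (hε : 0 ≤ ε)
    (hO' : ∃ O' : Matrix (Fin 2 × Fin d) (Fin 2 × Fin d) ℂ,
      O'.PosSemidef ∧ (1 - O').PosSemidef ∧
      (O' * (((1/2 : ℂ) • (proj 0 ⊗ₖ ρ₀ + proj 1 ⊗ₖ ρ₁)) -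
             ((1/2 : ℂ) • ((1 : Matrix (Fin 2) (Fin 2) ℂ) ⊗ₖ ρ₀)))).trace = (ε : ℂ)) :
    ∃ O : Matrix (Fin d) (Fin d) ℂ,
      O.PosSemidef ∧ (1 - O).PosSemidef ∧
      ε / 2 ≤ ((O * (ρ₁ - ρ₀)).trace).re := by
  obtain ⟨O', hO'_nonneg, hO'_le_one, hadv⟩ := hO'
  refine ⟨O'.submatrix (1, ·) (1, ·), hO'_nonneg.submatrix _,
    hO'_le_one.one_sub_submatrix (Prod.mk_right_injective 1), ?_⟩
  rw [hybrid_sub_eq, Matrix.mul_smul, trace_smul, proj, trace_mul_single_kronecker,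
    smul_eq_mul] at hadv
  have hadv_block : (O'.submatrix (1, ·) (1, ·) * (ρ₁ - ρ₀)).trace = 2 * ε := by
    linear_combination 2 * hadv
  rw [hadv_block]
  simp only [Complex.re_ofNat, Complex.mul_re, Complex.ofReal_re, Complex.ofReal_im,
    Complex.im_ofNat]
  linarith

/-- If there is a distinguisher `O'` with advantage `ε ≥ 0` against the
hybrid states `ρ'₀ = (I₂/2) ⊗ ρ₀` and `ρ'₁ = (1/2)·Σ_b |b⟩⟨b| ⊗ ρ_b`, then there is a
distinguisher `O` with advantage at least `ε/2` against `ρ₀, ρ₁`. -/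
theorem hybrid_distinguisher
    (d : ℕ) (hd : 1 ≤ d)
    (ρ₀ ρ₁ : Matrix (Fin d) (Fin d) ℂ)
    (hρ₀ : ρ₀.PosSemidef) (hρ₀t : ρ₀.trace = 1)
    (hρ₁ : ρ₁.PosSemidef) (hρ₁t : ρ₁.trace = 1)
    (ε : ℝ) (hε : 0 ≤ ε)
    (hO' : ∃ O' : Matrix (Fin 2 × Fin d) (Fin 2 × Fin d) ℂ,
      O'.PosSemidef ∧ (1 - O').PosSemidef ∧
      (O' * (((1/2 : ℂ) • (proj 0 ⊗ₖ ρ₀ + proj 1 ⊗ₖ ρ₁)) -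
             ((1/2 : ℂ) • ((1 : Matrix (Fin 2) (Fin 2) ℂ) ⊗ₖ ρ₀)))).trace = (ε : ℂ)) :
    ∃ O : Matrix (Fin d) (Fin d) ℂ,
      O.PosSemidef ∧ (1 - O).PosSemidef ∧
      ε / 2 ≤ ((O * (ρ₁ - ρ₀)).trace).re :=
  hybrid_distinguisher_general d ρ₀ ρ₁ ε hε hO'
end
end

section
/- (Quantum Goldreich–Levin, Adcock–Cleve.) Let n, m ≥ 1, let x ∈ {0,1}ⁿ, and for each r ∈ {0,1}ⁿ let U_r be a 2^m × 2^m unitary matrix. Define the block-diagonal unitary U = Σ_{r∈{0,1}ⁿ} |r⟩⟨r| ⊗ U_r on ℂ^{2ⁿ} ⊗ ℂ^{2^m}. On n+m+1 qubits, ordered as n input qubits, then m work qubits (the last work qubit being the prediction qubit), then one ancilla qubit, define the unitary R = (H^{⊗n} ⊗ I_{2^{m+1}}) · (U† ⊗ I₂) · (I_{2^{n+m−1}} ⊗ CZ) · (U ⊗ I₂) · (H^{⊗n} ⊗ I_{2^m} ⊗ X), where CZ = diag(1,1,1,−1) acts on the prediction qubit and the ancilla. If 2^{−n} Σ_{r∈{0,1}ⁿ}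 ‖(I_{2^{m−1}} ⊗ ⟨r·x|) U_r |0^m⟩‖² ≥ 1/2 + ε, where the bra ⟨r·x| acts on the prediction qubit and r·x = Σᵢ rᵢxᵢ mod 2, then |(⟨x| ⊗ ⟨0^m| ⊗ ⟨1|) R (|0ⁿ⟩ ⊗ |0^m⟩ ⊗ |0⟩)| ≥ 2ε. -/
/-!
With the ancilla flipped to `|1⟩`, the controlled-`Z` acts as `Z` on the prediction qubit, so on
the branch `|r⟩` the block `U_r† Z U_r` has `(0^m, 0^m)` entry
`Σ_w (-1)^{w_last} |⟨w|U_r|0^m⟩|²`. The outer Hadamard layers weight the branch `r` of the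
amplitude of `|x, 0^m, 1⟩` by `2^{-n} (-1)^{r·x}`, and since `U_r|0^m⟩` is a unit vector the
weighted entry is `2^{-n} (2 p_r - 1)`, where `p_r` is the probability that the prediction
qubit reads `r·x`. So the amplitude is the real number `2 · avg_r p_r - 1 ≥ 2ε`.
-/

open Matrix BigOperators

noncomputable section

namespace QGL

abbrev Bit := ZMod 2

/-- Inner product of bit strings, mod 2. -/
def dot {n : ℕ} (r x : Fin n → Bit) : Bit := ∑ i, r i * x i

/-- Index set for `n + m + 1` qubits: `n` input qubits, `m` work qubits, one ancilla. -/
abbrev Idx (n m : ℕ) := (Fin n → Bit) × (Fin m → Bit) × Bit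

/-- `H^{⊗n} ⊗ I` acting on the first `n` qubits. -/
def hadN (n m : ℕ) : Matrix (Idx n m) (Idx n m) ℂ :=
  Matrix.of fun p q =>
    if p.2 = q.2 then ((-1 : ℂ) ^ (dot p.1 q.1).val) * ((((Real.sqrt 2 : ℝ) : ℂ)) ^ n)⁻¹ else 0

/-- `U ⊗ I₂`, where `U = Σ_r |r⟩⟨r| ⊗ U_r` acts on the input and work qubits. -/
def Ufull (n m : ℕ) (U : (Fin n → Bit) → Matrix (Fin m → Bit) (Fin m → Bit) ℂ) :
    Matrix (Idx n m) (Idx n m) ℂ :=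
  Matrix.of fun p q => if p.1 = q.1 ∧ p.2.2 = q.2.2 then U p.1 p.2.1 q.2.1 else 0

/-- `I ⊗ CZ`, where `CZ = diag(1,1,1,-1)` acts on the prediction qubit
(the last work qubit) and the ancilla. -/
def CZfull (n m : ℕ) (hm : 1 ≤ m) : Matrix (Idx n m) (Idx n m) ℂ :=
  Matrix.of fun p q =>
    if p = q then (if p.2.1 ⟨m - 1, by omega⟩ = 1 ∧ p.2.2 = 1 then -1 else 1) else 0

/-- `I ⊗ I ⊗ X`, the bit flip on the ancilla qubit. -/
def Xanc (n m : ℕ) : Matrix (Idx n m) (Idx n m) ℂ :=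
  Matrix.of fun p q => if p.1 = q.1 ∧ p.2.1 = q.2.1 ∧ p.2.2 = q.2.2 + 1 then 1 else 0

/-- The Adcock–Cleve recovery circuit
`R = (H^{⊗n} ⊗ I)·(U† ⊗ I₂)·(I ⊗ CZ)·(U ⊗ I₂)·(H^{⊗n} ⊗ I_{2^m} ⊗ X)`. -/
def Rmat (n m : ℕ) (hm : 1 ≤ m)
    (U : (Fin n → Bit) → Matrix (Fin m → Bit) (Fin m → Bit) ℂ) :
    Matrix (Idx n m) (Idx n m) ℂ :=
  hadN n m * (Ufull n m U)ᴴ * CZfull n m hm * Ufull n m U * (hadN n m * Xanc n m)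

lemma sum_normSq_apply_eq_one_of_mem_unitaryGroup {ι : Type*} [Fintype ι] [DecidableEq ι]
    {A : Matrix ι ι ℂ} (hA : A ∈ Matrix.unitaryGroup ι ℂ) (j : ι) :
    ∑ i, Complex.normSq (A i j) = 1 := by
  have hjj : (star A * A) j j = 1 := by
    rw [Matrix.mem_unitaryGroup_iff'.mp hA, Matrix.one_apply_eq]
  rw [Matrix.mul_apply] at hjj
  exact_mod_cast (by simpa [Complex.normSq_eq_conj_mul_self] using hjj :
    ((∑ i, Complex.normSq (A i j) : ℝ) : ℂ) = 1)

lemma sum_ite_one_neg_one_mul_eq_two_mul_sub_one {ι : Type*} [Fintype ι] (a : ι → ℝ)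
    (ha : ∑ i, a i = 1) (P : ι → Prop) [DecidablePred P] :
    ∑ i, (if P i then 1 else -1) * a i = 2 * ∑ i, (if P i then a i else 0) - 1 := by
  calc ∑ i, (if P i then 1 else -1) * a i = ∑ i, (2 * (if P i then a i else 0) - a i) :=
        Finset.sum_congr rfl fun i _ => by split_ifs <;> ring
    _ = 2 * ∑ i, (if P i then a i else 0) - 1 := by
        rw [Finset.sum_sub_distrib, ← Finset.mul_sum, ha]

lemma neg_one_pow_val_mul_ite_eq_ite (a b : Bit) :
    (-1 : ℂ) ^ a.val * (if b = 1 then -1 else 1) = if b = a then 1 else -1 := by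
  have h : (1 : Bit) ≠ 0 := by decide
  have hbit : ∀ c : Bit, c = 0 ∨ c = 1 := by decide
  rcases hbit a with rfl | rfl <;> rcases hbit b with rfl | rfl <;> simp [h, h.symm, ZMod.val_one]

lemma inv_sqrt_two_pow_mul_self (n : ℕ) :
    (((Real.sqrt 2 : ℝ) : ℂ) ^ n)⁻¹ * (((Real.sqrt 2 : ℝ) : ℂ) ^ n)⁻¹ = ((2 : ℂ) ^ n)⁻¹ := by
  rw [← mul_inv, ← mul_pow, ← Complex.ofReal_mul, Real.mul_self_sqrt zero_le_two]
  norm_num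

section Circuit

variable {n m : ℕ}

lemma dot_comm (r x : Fin n → Bit) : dot r x = dot x r := by
  simp only [dot, mul_comm]

lemma dot_zero (r : Fin n → Bit) : dot r (fun _ => 0) = 0 := by
  simp [dot]

lemma hadN_mul_apply (M : Matrix (Idx n m) (Idx n m) ℂ) (p q : Idx n m) :
    (hadN n m * M) p q =
      (((Real.sqrt 2 : ℝ) : ℂ) ^ n)⁻¹ * ∑ s, (-1 : ℂ) ^ (dot p.1 s).val * M (s, p.2) q := by
  simp [Matrix.mul_apply, hadN, Fintype.sum_prod_type, Prod.ext_iff, ite_and, Finset.mul_sum]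
  exact Finset.sum_congr rfl fun _ _ => by ring

lemma Ufull_mul_apply (U : (Fin n → Bit) → Matrix (Fin m → Bit) (Fin m → Bit) ℂ)
    (M : Matrix (Idx n m) (Idx n m) ℂ) (p q : Idx n m) :
    (Ufull n m U * M) p q = ∑ w, U p.1 p.2.1 w * M (p.1, w, p.2.2) q := by
  simp [Matrix.mul_apply, Ufull, Fintype.sum_prod_type, ite_and]

lemma conjTranspose_Ufull_mul_apply (U : (Fin n → Bit) → Matrix (Fin m → Bit) (Fin m → Bit) ℂ)
    (M : Matrix (Idx n m) (Idx n m) ℂ) (p q : Idx n m) :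
    ((Ufull n m U)ᴴ * M) p q = ∑ w, star (U p.1 w p.2.1) * M (p.1, w, p.2.2) q := by
  simp [Matrix.mul_apply, Ufull, Fintype.sum_prod_type, ite_and, apply_ite (starRingEnd ℂ)]

lemma CZfull_mul_apply (hm : 1 ≤ m) (M : Matrix (Idx n m) (Idx n m) ℂ) (p q : Idx n m) :
    (CZfull n m hm * M) p q =
      (if p.2.1 ⟨m - 1, by omega⟩ = 1 ∧ p.2.2 = 1 then -1 else 1) * M p q := by
  simp [Matrix.mul_apply, CZfull]

lemma hadN_mul_Xanc_apply_zero (p : Idx n m) :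
    (hadN n m * Xanc n m) p (fun _ => 0, fun _ => 0, 0) =
      if p.2 = (fun _ => 0, 1) then (((Real.sqrt 2 : ℝ) : ℂ) ^ n)⁻¹ else 0 := by
  simp [hadN_mul_apply, Xanc, Prod.ext_iff, ite_and, dot_zero]

lemma Rmat_apply (hm : 1 ≤ m) (x : Fin n → Bit)
    (U : (Fin n → Bit) → Matrix (Fin m → Bit) (Fin m → Bit) ℂ) :
    Rmat n m hm U (x, fun _ => 0, 1) (fun _ => 0, fun _ => 0, 0) =
      (((2 ^ n)⁻¹ * ∑ s : Fin n → Bit, ∑ w : Fin m → Bit,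
        (if w ⟨m - 1, by omega⟩ = dot s x then 1 else -1) * Complex.normSq (U s w (fun _ => 0))
        : ℝ) : ℂ) := by
  simp only [Rmat, Matrix.mul_assoc]
  rw [hadN_mul_apply]
  simp only [conjTranspose_Ufull_mul_apply, CZfull_mul_apply, Ufull_mul_apply,
    hadN_mul_Xanc_apply_zero]
  simp only [Prod.mk.injEq, and_true, mul_ite, mul_zero, Finset.sum_ite_eq', Finset.mem_univ,
    if_true]
  push_cast
  simp only [Finset.mul_sum]
  refine Finset.sum_congr rfl fun s _ => Finset.sum_congr rfl fun w _ => ?_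
  rw [apply_ite ((↑) : ℝ → ℂ), Complex.ofReal_one, Complex.ofReal_neg, Complex.ofReal_one,
    dot_comm, ← neg_one_pow_val_mul_ite_eq_ite, Complex.normSq_eq_conj_mul_self,
    ← inv_sqrt_two_pow_mul_self]
  simp only [RCLike.star_def]
  ring

end Circuit

/-- Quantum Goldreich–Levin, Adcock–Cleve: if on average over `r` the
prediction qubit of `U_r|0^m⟩` is `(1/2 + ε)`-correlated with `r·x`, then the circuit `R`
recovers `x` with amplitude at least `2ε`. -/
theorem quantum_goldreich_levin
    (n m : ℕ) (hm : 1 ≤ m) (x : Fin n → Bit)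
    (U : (Fin n → Bit) → Matrix (Fin m → Bit) (Fin m → Bit) ℂ)
    (hU : ∀ r, U r ∈ Matrix.unitaryGroup (Fin m → Bit) ℂ)
    (ε : ℝ)
    (hpred : 1/2 + ε ≤ (((2 : ℝ) ^ n)⁻¹) * ∑ r : Fin n → Bit, ∑ w : Fin m → Bit,
        (if w ⟨m - 1, by omega⟩ = dot r x then Complex.normSq (U r w (fun _ => 0)) else 0)) :
    2 * ε ≤ ‖
      (Rmat n m hm U (x, fun _ => 0, 1) (fun _ => 0, fun _ => 0, 0))‖ := by
  rw [Rmat_apply, Complex.norm_real, Real.norm_eq_abs]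
  simp only [sum_ite_one_neg_one_mul_eq_two_mul_sub_one _
    (sum_normSq_apply_eq_one_of_mem_unitaryGroup (hU _) (fun _ => 0))]
  refine le_trans ?_ (le_abs_self _)
  rw [Finset.sum_sub_distrib, ← Finset.mul_sum, Finset.sum_const, Finset.card_univ]
  simp only [Fintype.card_fun, ZMod.card, Fintype.card_fin, nsmul_eq_mul, Nat.cast_pow,
    Nat.cast_ofNat, mul_one]
  rw [mul_sub, inv_mul_cancel₀ (by positivity)]
  linarith

end QGL
end
end

section
/- Let (Ω, P) be a probability space, n ≥ 1, and let Γ₁, …, Γₙ be measurable events with Υᵢ = Γ₁ ∩ ⋯ ∩ Γᵢ, Υ₀ = Ω, ε := P(Υₙ) > 0, and αᵢ = P(Γᵢ ∩ Υ_{i−1}) / P(Υ_{i−1}). Then for every real t > 0, if n > 2t·ln(1/ε), at least n/2 of the indices i ∈ [n] satisfy αᵢ > 1 − 1/t; in particular there exists an index i ∈ [n] with αᵢ > 1 − 1/t. -/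
open MeasureTheory Finset

/-!
The ratios `αᵢ` telescope: `∏ αᵢ = P(Υₙ) / P(Υ₀) = ε`. Every `αᵢ` lies in `(0, 1]`, and each index
with `αᵢ ≤ 1 - 1/t` contributes at most `log αᵢ ≤ αᵢ - 1 ≤ -1/t` to `log ε = ∑ log αᵢ`, so there are
at most `t · ln(1/ε) < n/2` such indices.
-/

theorem Finset.eq_mul_prod_range_div_of_ne_zero {K : Type*} [Field K] (f : ℕ → K) {n : ℕ}
    (hf : ∀ k < n, f k ≠ 0) : f n = f 0 * ∏ k ∈ range n, f (k + 1) / f k := by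
  induction n with
  | zero => simp
  | succ n ih =>
    rw [prod_range_succ, ← mul_assoc, ← ih fun k hk => hf k (by omega),
      mul_div_cancel₀ _ (hf n (by omega))]

theorem mul_card_filter_le_log_one_div_of_le_prod {ι : Type*} (s : Finset ι) {a : ι → ℝ}
    (ha_pos : ∀ i ∈ s, 0 < a i) (ha_le : ∀ i ∈ s, a i ≤ 1) {ε : ℝ} (hε : 0 < ε)
    (hprod : ε ≤ ∏ i ∈ s, a i) (δ : ℝ) :
    δ * #(s.filter fun i => a i ≤ 1 - δ) ≤ Real.log (1 / ε) := by
  set bad := s.filter fun i => a i ≤ 1 - δ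
  have hlog_bad : ∑ i ∈ bad, Real.log (a i) ≤ -(δ * #bad) := by
    calc ∑ i ∈ bad, Real.log (a i) ≤ ∑ _i ∈ bad, -δ := by
          refine sum_le_sum fun i hi => ?_
          obtain ⟨his, hi⟩ := mem_filter.mp hi
          linarith [Real.log_le_sub_one_of_pos (ha_pos i his)]
      _ = -(δ * #bad) := by simp [mul_comm]
  have hlog_good : ∑ i ∈ s.filter (fun i => ¬ a i ≤ 1 - δ), Real.log (a i) ≤ 0 :=
    sum_nonpos fun i hi =>
      Real.log_nonpos (ha_pos i (mem_filter.mp hi).1).le (ha_le i (mem_filter.mp hi).1)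
  have hlog_prod : Real.log ε ≤ ∑ i ∈ s, Real.log (a i) := by
    rw [← Real.log_prod fun i hi => (ha_pos i hi).ne']
    exact Real.log_le_log hε hprod
  rw [← sum_filter_add_sum_filter_not s (fun i => a i ≤ 1 - δ)] at hlog_prod
  rw [one_div, Real.log_inv]
  linarith

section PrefixInter

variable {Ω : Type*} {n : ℕ}

/-- `prefixInter Γ k` is the paper's `Υₖ = Γ₁ ∩ ⋯ ∩ Γₖ`, with `Fin n` indexed from `0`. -/
def prefixInter (Γ : Fin n → Set Ω) (k : ℕ) : Set Ω :=
  ⋂ (j : Fin n) (_ : (j : ℕ) < k), Γ j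

variable (Γ : Fin n → Set Ω)

theorem prefixInter_zero : prefixInter Γ 0 = Set.univ := by
  simp [prefixInter]

theorem prefixInter_self : prefixInter Γ n = ⋂ j, Γ j := by
  simp [prefixInter]

theorem iInter_subset_prefixInter (k : ℕ) : ⋂ j, Γ j ⊆ prefixInter Γ k :=
  Set.subset_iInter₂ fun j _ => Set.iInter_subset Γ j

theorem inter_prefixInter (i : Fin n) : Γ i ∩ prefixInter Γ i = prefixInter Γ (i + 1) := by
  ext x
  simp only [prefixInter, Set.mem_inter_iff, Set.mem_iInter, Nat.lt_succ_iff_lt_or_eq]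
  constructor
  · rintro ⟨hi, hlt⟩ j (hj | hj)
    · exact hlt j hj
    · exact Fin.ext hj ▸ hi
  · intro h
    exact ⟨h i (Or.inr rfl), fun j hj => h j (Or.inl hj)⟩

section Measure

variable [MeasurableSpace Ω] (μ : Measure Ω) {Γ}

theorem measure_prefixInter_ne_zero (hΓ : μ (⋂ j, Γ j) ≠ 0) (k : ℕ) :
    μ (prefixInter Γ k) ≠ 0 :=
  fun h => hΓ (measure_mono_null (iInter_subset_prefixInter Γ k) h)

theorem measureReal_inter_prefixInter_div_mem_Ioc [IsFiniteMeasure μ] (hΓ : μ (⋂ j, Γ j) ≠ 0)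
    (i : Fin n) :
    μ.real (Γ i ∩ prefixInter Γ i) / μ.real (prefixInter Γ i) ∈ Set.Ioc 0 1 := by
  have hpos : ∀ k, 0 < μ.real (prefixInter Γ k) := fun k =>
    ENNReal.toReal_pos (measure_prefixInter_ne_zero μ hΓ k) (measure_ne_top μ _)
  refine ⟨div_pos ?_ (hpos i),
    div_le_one_of_le₀ (measureReal_mono Set.inter_subset_right) (hpos i).le⟩
  rw [inter_prefixInter]
  exact hpos _

theorem prod_measureReal_inter_prefixInter_div [IsProbabilityMeasure μ]
    (hΓ : μ (⋂ j, Γ j) ≠ 0) :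
    ∏ i : Fin n, μ.real (Γ i ∩ prefixInter Γ i) / μ.real (prefixInter Γ i) =
      μ.real (⋂ j, Γ j) := by
  simp only [inter_prefixInter]
  rw [Fin.prod_univ_eq_prod_range
      (fun k => μ.real (prefixInter Γ (k + 1)) / μ.real (prefixInter Γ k)),
    ← prefixInter_self, eq_mul_prod_range_div_of_ne_zero (fun k => μ.real (prefixInter Γ k))
      fun k _ => (measureReal_ne_zero_iff).mpr (measure_prefixInter_ne_zero μ hΓ k),
    prefixInter_zero, probReal_univ, one_mul]

end Measure

end PrefixInter

theorem estimation_lemma_half_general {Ω : Type*} [MeasurableSpace Ω]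
    (μ : Measure Ω) [IsProbabilityMeasure μ]
    (n : ℕ) (hn : 1 ≤ n)
    (Γ : Fin n → Set Ω)
    (ε : ℝ) (hε : ε = (μ (⋂ j : Fin n, Γ j)).toReal) (hεpos : 0 < ε)
    (α : Fin n → ℝ)
    (hα : ∀ i : Fin n, α i =
      (μ (Γ i ∩ ⋂ (j : Fin n) (_ : (j : ℕ) < (i : ℕ)), Γ j)).toReal /
      (μ (⋂ (j : Fin n) (_ : (j : ℕ) < (i : ℕ)), Γ j)).toReal)
    (t : ℝ) (ht : 0 < t)
    (hnt : 2 * t * Real.log (1 / ε) < (n : ℝ)) :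
    (n : ℝ) / 2 ≤
      ((Finset.univ.filter (fun i : Fin n => 1 - 1 / t < α i)).card : ℝ) ∧
    ∃ i : Fin n, 1 - 1 / t < α i := by
  have hΓ : μ (⋂ j, Γ j) ≠ 0 := (measureReal_ne_zero_iff).mp (hε ▸ hεpos).ne'
  have hα_mem : ∀ i, α i ∈ Set.Ioc 0 1 := fun i => by
    rw [hα i]
    exact measureReal_inter_prefixInter_div_mem_Ioc μ hΓ i
  have hprod : ε = ∏ i, α i := by
    simp only [hα]
    exact hε.trans (prod_measureReal_inter_prefixInter_div μ hΓ).symm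
  set good := univ.filter fun i => 1 - 1 / t < α i
  set bad := univ.filter fun i => α i ≤ 1 - 1 / t
  have hbad : (#bad : ℝ) ≤ t * Real.log (1 / ε) := by
    have := mul_card_filter_le_log_one_div_of_le_prod univ (fun i _ => (hα_mem i).1)
      (fun i _ => (hα_mem i).2) hεpos hprod.le (1 / t)
    rwa [one_div_mul_eq_div, div_le_iff₀' ht] at this
  have hsplit : (#good : ℝ) + #bad = n := by
    have := card_filter_add_card_filter_not (s := univ) fun i : Fin n => 1 - 1 / t < α i
    simp only [not_lt, card_univ, Fintype.card_fin] at this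
    exact_mod_cast this
  have hgood : (n : ℝ) / 2 ≤ #good := by linarith
  refine ⟨hgood, ?_⟩
  obtain ⟨i, hi⟩ : good.Nonempty := by
    rw [← card_pos, ← Nat.cast_pos (α := ℝ)]
    have : (1 : ℝ) ≤ n := by exact_mod_cast hn
    linarith
  exact ⟨i, (mem_filter.mp hi).2⟩

/-- with `Υᵢ = Γ₁ ∩ ⋯ ∩ Γᵢ`, `ε = P(Υₙ) > 0` and
`αᵢ = P(Γᵢ ∩ Υ_{i-1}) / P(Υ_{i-1})`, for every `t > 0`, if `n > 2t·ln(1/ε)` then at least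
`n/2` of the indices `i ∈ [n]` satisfy `αᵢ > 1 - 1/t`; in particular some index does. -/
theorem estimation_lemma_half {Ω : Type*} [MeasurableSpace Ω]
    (μ : Measure Ω) [IsProbabilityMeasure μ]
    (n : ℕ) (hn : 1 ≤ n)
    (Γ : Fin n → Set Ω) (hΓ : ∀ i, MeasurableSet (Γ i))
    (ε : ℝ) (hε : ε = (μ (⋂ j : Fin n, Γ j)).toReal) (hεpos : 0 < ε)
    (α : Fin n → ℝ)
    (hα : ∀ i : Fin n, α i =
      (μ (Γ i ∩ ⋂ (j : Fin n) (_ : (j : ℕ) < (i : ℕ)), Γ j)).toReal /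
      (μ (⋂ (j : Fin n) (_ : (j : ℕ) < (i : ℕ)), Γ j)).toReal)
    (t : ℝ) (ht : 0 < t)
    (hnt : 2 * t * Real.log (1 / ε) < (n : ℝ)) :
    (n : ℝ) / 2 ≤
      ((Finset.univ.filter (fun i : Fin n => 1 - 1 / t < α i)).card : ℝ) ∧
    ∃ i : Fin n, 1 - 1 / t < α i :=
  estimation_lemma_half_general μ n hn Γ ε hε hεpos α hα t ht hnt
end
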